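/- For all α⁺, λ⁺, α⁻, λ⁻ > 0 and every z ∈ ℝ, the characteristic function of the bilateral Gamma distribution Γ(α⁺,λ⁺;α⁻,λ⁻) satisfies φ(z) = (λ⁺/(λ⁺ − iz))^{α⁺} · (λ⁻/(λ⁻ + iz))^{α⁻}, where the complex powers are the principal branch. -/

import Mathlib

/-!
The complex moment generating function `z ↦ ∫ exp (z x) dΓ(a,r)` is holomorphic on the half-plane
`Re z < r`. On the real half-line `t < r` the real Gamma integral gives `(r / (r - t)) ^ a`, which
extends holomorphically to the same half-plane, so by the identity theorem the two agree there;
on the imaginary axis this is the characteristic function of `Γ(a,r)`. For the bilateral law,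
`E exp (i z (X - Y)) = φ_X(z) φ_Y(-z)` by independence.
-/

open MeasureTheory ProbabilityTheory

/-- The bilateral Gamma distribution `Γ(α⁺,λ⁺;α⁻,λ⁻)`: the law of `X − Y` for independent
`X ~ Γ(α⁺,λ⁺)`, `Y ~ Γ(α⁻,λ⁻)`, i.e. the pushforward of the product measure under
`(x,y) ↦ x − y`. -/
noncomputable def bilateralGammaMeasure (ap lp am lm : ℝ) : Measure ℝ :=
  ((gammaMeasure ap lp).prod (gammaMeasure am lm)).map (fun p => p.1 - p.2)

open Complex Set Filter Topology

lemma charFun_map_sub_prod {E : Type*} [NormedAddCommGroup E] [InnerProductSpace ℝ E]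
    [MeasurableSpace E] [OpensMeasurableSpace E] [MeasurableSub₂ E]
    {μ ν : Measure E} [SFinite μ] [SFinite ν] (t : E) :
    charFun ((μ.prod ν).map (fun p ↦ p.1 - p.2)) t = charFun μ t * charFun ν (-t) := by
  rw [charFun_apply, integral_map (by fun_prop) (by fun_prop), charFun_apply, charFun_apply,
    ← integral_prod_mul]
  congr with p
  rw [← Complex.exp_add, inner_sub_left, inner_neg_right]
  push_cast
  ring_nf

section Gamma

variable {a r : ℝ}

lemma integral_gammaMeasure_eq_integral_smul {F : Type*} [NormedAddCommGroup F] [NormedSpace ℝ F]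
    (ha : 0 < a) (hr : 0 < r) (f : ℝ → F) :
    ∫ x, f x ∂(gammaMeasure a r) = ∫ x, gammaPDFReal a r x • f x := by
  rw [gammaMeasure, integral_withDensity_eq_integral_toReal_smul (f := gammaPDF a r)
    (measurable_gammaPDFReal a r).ennreal_ofReal (ae_of_all _ fun _ ↦ ENNReal.ofReal_lt_top)]
  simp_rw [gammaPDF, ENNReal.toReal_ofReal (gammaPDFReal_nonneg ha hr _)]

lemma mgf_id_gammaMeasure (ha : 0 < a) (hr : 0 < r) {t : ℝ} (ht : t < r) :
    mgf id (gammaMeasure a r) t = (r / (r - t)) ^ a := by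
  have hrt : 0 < r - t := sub_pos.mpr ht
  rw [mgf, integral_gammaMeasure_eq_integral_smul ha hr,
    ← setIntegral_eq_integral_of_forall_compl_eq_zero (s := Ici 0)
      fun x hx ↦ by simp [gammaPDFReal, show ¬ 0 ≤ x from hx],
    integral_Ici_eq_integral_Ioi]
  calc ∫ x in Ioi 0, gammaPDFReal a r x • Real.exp (t * id x)
      = ∫ x in Ioi 0, r ^ a / Real.Gamma a * (x ^ (a - 1) * Real.exp (-((r - t) * x))) := by
        refine setIntegral_congr_fun measurableSet_Ioi fun x (hx : 0 < x) ↦ ?_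
        rw [gammaPDFReal, if_pos hx.le, smul_eq_mul, id, mul_assoc, mul_assoc, ← Real.exp_add]
        ring_nf
    _ = (r / (r - t)) ^ a := by
        rw [integral_const_mul, Real.integral_rpow_mul_exp_neg_mul_Ioi ha hrt,
          Real.div_rpow hr.le hrt.le, Real.div_rpow zero_le_one hrt.le, Real.one_rpow]
        field_simp [(Real.Gamma_pos_of_pos ha).ne']

lemma Iio_subset_integrableExpSet_gammaMeasure (ha : 0 < a) (hr : 0 < r) :
    Iio r ⊆ integrableExpSet id (gammaMeasure a r) := fun t ht ↦
  -- a non-integrable function has Bochner integral `0`, but the computed value is positive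
  Integrable.of_integral_ne_zero <| by
    rw [← mgf, mgf_id_gammaMeasure ha hr ht]
    exact (Real.rpow_pos_of_pos (div_pos hr (sub_pos.mpr ht)) a).ne'

lemma ofReal_sub_ne_zero_of_re_lt {z : ℂ} (hz : z.re < r) : (r : ℂ) - z ≠ 0 :=
  sub_ne_zero.mpr fun h ↦ by simp [← h] at hz

lemma ofReal_div_sub_mem_slitPlane (hr : 0 < r) {z : ℂ} (hz : z.re < r) :
    (r : ℂ) / (r - z) ∈ slitPlane := by
  refine mem_slitPlane_iff.mpr (Or.inl ?_)
  rw [div_re, ofReal_re, ofReal_im, zero_mul, zero_div, add_zero]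
  exact div_pos (mul_pos hr (by simpa using hz)) (normSq_pos.mpr (ofReal_sub_ne_zero_of_re_lt hz))

lemma analyticOnNhd_ofReal_div_sub_cpow (hr : 0 < r) (s : ℂ) :
    AnalyticOnNhd ℂ (fun z : ℂ ↦ ((r : ℂ) / (r - z)) ^ s) {z : ℂ | z.re < r} := by
  refine DifferentiableOn.analyticOnNhd (fun z hz ↦ ?_) (isOpen_lt continuous_re continuous_const)
  refine (DifferentiableAt.cpow_const (f := fun z : ℂ ↦ (r : ℂ) / (r - z)) ?_
    (ofReal_div_sub_mem_slitPlane hr hz)).differentiableWithinAt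
  fun_prop (disch := exact ofReal_sub_ne_zero_of_re_lt hz)

lemma complexMGF_id_gammaMeasure (ha : 0 < a) (hr : 0 < r) {z : ℂ} (hz : z.re < r) :
    complexMGF id (gammaMeasure a r) z = (r / (r - z)) ^ (a : ℂ) := by
  have hMGF : AnalyticOnNhd ℂ (complexMGF id (gammaMeasure a r)) {z : ℂ | z.re < r} :=
    analyticOnNhd_complexMGF.mono fun z hz ↦
      interior_maximal (Iio_subset_integrableExpSet_gammaMeasure ha hr) isOpen_Iio hz
  refine hMGF.eqOn_of_preconnected_of_frequently_eq (analyticOnNhd_ofReal_div_sub_cpow hr a)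
    (convex_halfSpace_re_lt r).isPreconnected (z₀ := 0) (by simpa using hr) ?_ hz
  have hreal : ∀ᶠ t : ℝ in 𝓝[≠] 0,
      complexMGF id (gammaMeasure a r) t = (r / (r - t)) ^ (a : ℂ) := by
    filter_upwards [nhdsWithin_le_nhds (gt_mem_nhds hr)] with t ht
    rw [complexMGF_ofReal, mgf_id_gammaMeasure ha hr ht,
      ofReal_cpow (div_pos hr (sub_pos.mpr ht)).le]
    norm_cast
  have hofReal : Tendsto ((↑) : ℝ → ℂ) (𝓝[≠] 0) (𝓝[≠] 0) :=
    continuous_ofReal.continuousWithinAt.tendsto_nhdsWithin fun _ _ ↦ by simp_all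
  simpa using hofReal.frequently hreal.frequently

lemma charFun_gammaMeasure (ha : 0 < a) (hr : 0 < r) (t : ℝ) :
    charFun (gammaMeasure a r) t = (r / (r - I * t)) ^ (a : ℂ) := by
  rw [← complexMGF_id_mul_I, complexMGF_id_gammaMeasure ha hr (by simpa using hr), mul_comm]

end Gamma

/-- the characteristic function of the bilateral Gamma distribution
`Γ(α⁺,λ⁺;α⁻,λ⁻)` is `φ(z) = (λ⁺/(λ⁺ − iz))^{α⁺} · (λ⁻/(λ⁻ + iz))^{α⁻}`
(principal branch powers). -/
theorem bilateralGamma_charFun (ap lp am lm : ℝ)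
    (hap : 0 < ap) (hlp : 0 < lp) (ham : 0 < am) (hlm : 0 < lm) (z : ℝ) :
    ∫ x, Complex.exp (Complex.I * z * x) ∂(bilateralGammaMeasure ap lp am lm)
      = ((lp : ℂ) / (lp - Complex.I * z)) ^ (ap : ℂ)
        * ((lm : ℂ) / (lm + Complex.I * z)) ^ (am : ℂ) := by
  have := isProbabilityMeasure_gammaMeasure hap hlp
  have := isProbabilityMeasure_gammaMeasure ham hlm
  calc ∫ x, cexp (I * z * x) ∂(bilateralGammaMeasure ap lp am lm)
      = charFun (bilateralGammaMeasure ap lp am lm) z := by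
        simp_rw [charFun_apply_real, mul_right_comm _ _ I, mul_comm I]
    _ = charFun (gammaMeasure ap lp) z * charFun (gammaMeasure am lm) (-z) :=
        charFun_map_sub_prod z
    _ = _ := by
        rw [charFun_gammaMeasure hap hlp, charFun_gammaMeasure ham hlm, ofReal_neg, mul_neg,
          sub_neg_eq_add]
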